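/- arXiv:1809.05287 — 2 statements merged into one kernel-verified Lean document; each statement's English description precedes it below -/
import Mathlib

section
/- In a d-tiling T, if two boxes A, B ∈ T ∪ T_ext intersect and touch in more than one dimension (i.e., A_i ∩ B_i is degenerate for at least two indices i), then there exists a point in A ∩ B that is contained in at least d + 2 boxes of T ∪ T_ext. -/
/- Common framework: axis-parallel boxes (with extended-real endpoints, to
accommodate the unbounded exterior boxes of `T_ext`), `d`-tilings of the cube
`[-1,1]^d`, the exterior boxes, proper tilings, slices, cuts, sides and
separations. -/

noncomputable section

open Classical

attribute [local instance] Classical.propDecidable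

/-- A `d`-box, given by the lower and upper endpoints of its coordinate
intervals (extended reals, so that the unbounded exterior boxes are covered).
The interval in coordinate `i` is `[lo i, hi i]`. -/
structure Box (d : ℕ) where
  lo : Fin d → EReal
  hi : Fin d → EReal

namespace Box

variable {d : ℕ}

/-- Membership of a (real) point in a box. -/
def mem (B : Box d) (p : Fin d → ℝ) : Prop :=
  ∀ i, B.lo i ≤ (p i : EReal) ∧ (p i : EReal) ≤ B.hi i

/-- The set of real points of a box. -/
def toSet (B : Box d) : Set (Fin d → ℝ) := {p | B.mem p}

/-- The interior of a box (for full-dimensional boxes). -/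
def interior (B : Box d) : Set (Fin d → ℝ) :=
  {p | ∀ i, B.lo i < (p i : EReal) ∧ (p i : EReal) < B.hi i}

/-- The dimension of a box: the number of non-degenerate coordinate
intervals. -/
def dim (B : Box d) : ℕ :=
  (Finset.univ.filter fun i => B.lo i < B.hi i).card

/-- A box is full-dimensional (`d`-dimensional) if all of its coordinate
intervals are non-degenerate. -/
def FullDim (B : Box d) : Prop := ∀ i, B.lo i < B.hi i

end Box

/-- Two boxes intersect when they share a (real) point. -/
def Intersects {d : ℕ} (A B : Box d) : Prop := (A.toSet ∩ B.toSet).Nonempty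

/-- The dimension of the intersection `A ∩ B` of two boxes: the number of
coordinates `i` where the interval `A_i ∩ B_i` is non-degenerate. -/
def interDim {d : ℕ} (A B : Box d) : ℕ :=
  (Finset.univ.filter fun i =>
    max (A.lo i) (B.lo i) < min (A.hi i) (B.hi i)).card

/-- Two intersecting boxes touch in dimension `i` when `A_i ∩ B_i` is
degenerate. -/
def Touch {d : ℕ} (A B : Box d) (i : Fin d) : Prop :=
  Intersects A B ∧ max (A.lo i) (B.lo i) = min (A.hi i) (B.hi i)

/-- The cube `[-1,1]^d`. -/
def cube (d : ℕ) : Set (Fin d → ℝ) := {p | ∀ i, -1 ≤ p i ∧ p i ≤ 1}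

/-- A `d`-tiling: a finite collection of full-dimensional `d`-boxes contained
in `[-1,1]^d`, with pairwise disjoint interiors, whose union is `[-1,1]^d`. -/
def IsTiling {d : ℕ} (𝒯 : Finset (Box d)) : Prop :=
  (∀ B ∈ 𝒯, B.FullDim) ∧
  (∀ B ∈ 𝒯, B.toSet ⊆ cube d) ∧
  (∀ A ∈ 𝒯, ∀ B ∈ 𝒯, A ≠ B → A.interior ∩ B.interior = ∅) ∧
  (∀ p ∈ cube d, ∃ B ∈ 𝒯, B.mem p)

/-- The exterior box `T(i,-)` (for `s = false`) resp. `T(i,+)`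
(for `s = true`). -/
def extBox (d : ℕ) (i : Fin d) (s : Bool) : Box d where
  lo j := if j < i then ((-1 : ℝ) : EReal)
          else if j = i then (if s then ((1 : ℝ) : EReal) else ⊥) else ⊥
  hi j := if j < i then ((1 : ℝ) : EReal)
          else if j = i then (if s then ⊤ else ((-1 : ℝ) : EReal)) else ⊤

/-- The family `T_ext` of the `2d` exterior boxes. -/
def extBoxes (d : ℕ) : Finset (Box d) :=
  (Finset.univ : Finset (Fin d × Bool)).image fun q => extBox d q.1 q.2

/-- The collection `T ∪ T_ext`. -/
def withExt {d : ℕ} (𝒯 : Finset (Box d)) : Finset (Box d) := 𝒯 ∪ extBoxes d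

/-- A `d`-tiling is proper when every point of `ℝ^d` belongs to at most `d+1`
boxes of `T ∪ T_ext`. -/
def Proper {d : ℕ} (𝒯 : Finset (Box d)) : Prop :=
  ∀ p : Fin d → ℝ, ((withExt 𝒯).filter fun B => B.mem p).card ≤ d + 1

/-- The hyperplane `H^(i)_x` is generic w.r.t. `𝒯` when `x` is not an endpoint
of the `i`-th interval of any box of `𝒯`. -/
def Generic {d : ℕ} (𝒯 : Finset (Box d)) (i : Fin d) (x : ℝ) : Prop :=
  ∀ B ∈ 𝒯, (x : EReal) ≠ B.lo i ∧ (x : EReal) ≠ B.hi i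

/-- The slice `B|^(i)_x` of a box `B` by the hyperplane `H^(i)_x`, regarded
as a box of `ℝ^d` by omitting coordinate `i`. -/
def sliceBox {d : ℕ} (B : Box (d + 1)) (i : Fin (d + 1)) : Box d where
  lo j := B.lo (i.succAbove j)
  hi j := B.hi (i.succAbove j)

/-- The slice `T|^(i)_x` of a tiling by the hyperplane `H^(i)_x`. -/
def sliceT {d : ℕ} (𝒯 : Finset (Box (d + 1))) (i : Fin (d + 1)) (x : ℝ) :
    Finset (Box d) :=
  (𝒯.filter fun B => B.lo i ≤ (x : EReal) ∧ (x : EReal) ≤ B.hi i).image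
    fun B => sliceBox B i

/-- The box `B|^(i)-_x` (the nontrivial cases: if `B_i^+ < x` it is `B`
itself, and if `B_i^- < x ≤ B_i^+` the interval `B_i` is replaced by
`[B_i^-, 1]`; the empty case `x ≤ B_i^-` is filtered out in `cutMinus`). -/
def cutMinusBox {d : ℕ} (B : Box d) (i : Fin d) (x : ℝ) : Box d :=
  if B.hi i < (x : EReal) then B
  else ⟨B.lo, Function.update B.hi i ((1 : ℝ) : EReal)⟩

/-- The box `B|^(i)+_x` (the nontrivial cases: if `x < B_i^-` it is `B`
itself, and if `B_i^- ≤ x < B_i^+` the interval `B_i` is replaced by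
`[-1, B_i^+]`; the empty case `B_i^+ ≤ x` is filtered out in `cutPlus`). -/
def cutPlusBox {d : ℕ} (B : Box d) (i : Fin d) (x : ℝ) : Box d :=
  if (x : EReal) < B.lo i then B
  else ⟨Function.update B.lo i ((-1 : ℝ) : EReal), B.hi⟩

/-- The collection `T|^(i)-_x` of nonempty boxes `B|^(i)-_x`, `B ∈ T`. -/
def cutMinus {d : ℕ} (𝒯 : Finset (Box d)) (i : Fin d) (x : ℝ) :
    Finset (Box d) :=
  (𝒯.filter fun B => B.lo i < (x : EReal)).image fun B => cutMinusBox B i x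

/-- The collection `T|^(i)+_x` of nonempty boxes `B|^(i)+_x`, `B ∈ T`. -/
def cutPlus {d : ℕ} (𝒯 : Finset (Box d)) (i : Fin d) (x : ℝ) :
    Finset (Box d) :=
  (𝒯.filter fun B => (x : EReal) < B.hi i).image fun B => cutPlusBox B i x

/-- The side `S(B,i,-)` (for `s = false`) resp. `S(B,i,+)` (for `s = true`)
of a box `B`. -/
def sideBox {d : ℕ} (B : Box d) (i : Fin d) (s : Bool) : Box d where
  lo j := if j = i then (if s then B.hi i else B.lo i) else B.lo j
  hi j := if j = i then (if s then B.hi i else B.lo i) else B.hi j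

/-- The set of all sides of boxes of `T ∪ T_ext`. -/
def sides {d : ℕ} (𝒯 : Finset (Box d)) : Finset (Box d) :=
  ((withExt 𝒯) ×ˢ (Finset.univ : Finset (Fin d × Bool))).image
    fun q => sideBox q.1 q.2.1 q.2.2

/-- Two sides are linked when they intersect on a `(d-1)`-dimensional box. -/
def Linked {d : ℕ} (S S' : Box d) : Prop :=
  Intersects S S' ∧ interDim S S' = d - 1

/-- The linking relation, restricted to the sides of `T ∪ T_ext`. -/
def linkRel {d : ℕ} (𝒯 : Finset (Box d)) (S S' : Box d) : Prop :=
  S ∈ sides 𝒯 ∧ S' ∈ sides 𝒯 ∧ Linked S S'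

/-- The `∼`-equivalence class of a side (sides reachable by chains of linked
sides). -/
def sepClass {d : ℕ} (𝒯 : Finset (Box d)) (S₀ : Box d) : Set (Box d) :=
  {S | Relation.ReflTransGen (linkRel 𝒯) S₀ S}

/-- The separation generated by a side `S₀`: the union of the sides in its
`∼`-equivalence class. -/
def sepSet {d : ℕ} (𝒯 : Finset (Box d)) (S₀ : Box d) : Set (Fin d → ℝ) :=
  ⋃ S ∈ sepClass 𝒯 S₀, S.toSet

/-- `S` is degenerate in dimension `i` with value `x`, i.e. it is contained in
the hyperplane `H^(i)_x`. -/
def DegenAt {d : ℕ} (S : Box d) (i : Fin d) (x : ℝ) : Prop :=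
  S.lo i = (x : EReal) ∧ S.hi i = (x : EReal)

/-- A tiling is in general position when no two distinct separations are
coplanar: any two sides whose separations lie in a common hyperplane
`H^(i)_x` are `∼`-equivalent. -/
def GeneralPosition {d : ℕ} (𝒯 : Finset (Box d)) : Prop :=
  ∀ S₀ ∈ sides 𝒯, ∀ S₁ ∈ sides 𝒯, ∀ (i : Fin d) (x : ℝ),
    DegenAt S₀ i x → DegenAt S₁ i x →
      Relation.ReflTransGen (linkRel 𝒯) S₀ S₁

/-- The dimension of the intersection `⋂_{B ∈ 𝓑} B` of a finite family of
boxes: the number of coordinates where the intersected interval is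
non-degenerate. -/
def interDimAll {d : ℕ} (𝓑 : Finset (Box d)) : ℕ :=
  (Finset.univ.filter fun i =>
    𝓑.sup (fun B => B.lo i) < 𝓑.inf (fun B => B.hi i)).card

/-- The digraph `G(T)`: an arc from `A` to `B` (for distinct `A, B ∈ T`) iff
`B_i^- < A_i^+` for all `i`. -/
def tilingArc {d : ℕ} (𝒯 : Finset (Box d)) (A B : Box d) : Prop :=
  A ∈ 𝒯 ∧ B ∈ 𝒯 ∧ A ≠ B ∧ ∀ i, B.lo i < A.hi i


/-!
Assume `A ∈ T` (two exterior boxes touch in at most one dimension) and let `p` be the lower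
corner of `A ∩ B`. For small `ε` each of the `2^d` points `p + (±ε, …, ±ε)` lies in the
interior of exactly one box, and that box contains `p`. Recording which coordinates of `p` are
lower or upper endpoints of a box `C ∋ p` turns the boxes through `p` into a partition of the
discrete cube `{0,1}^d` into subcubes. Every coordinate is fixed by the part of `A` or that of
`B`, since `p` is their lower corner, and the two parts fix the touching coordinates oppositely.
Flipping coordinate `k` of a vertex of a part fixing `k` lands in a part fixing `k` the other
way; these `d` parts are distinct from each other and from those of `A` and `B`.
-/

section Subcube

variable {d : ℕ}

def InSubcube (σ : Fin d → Option Bool) (τ : Fin d → Bool) : Prop :=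
  ∀ k b, σ k = some b → τ k = b

def IsSubcubePartition (𝒮 : Finset (Fin d → Option Bool)) : Prop :=
  ∀ τ, ∃! σ, σ ∈ 𝒮 ∧ InSubcube σ τ

lemma InSubcube.update_of_eq_none {σ : Fin d → Option Bool} {τ : Fin d → Bool}
    (h : InSubcube σ τ) {k : Fin d} (hk : σ k = none) (b : Bool) :
    InSubcube σ (Function.update τ k b) := by
  intro m c hm
  rcases eq_or_ne m k with rfl | hmk
  · simp [hk] at hm
  · rw [Function.update_of_ne hmk]
    exact h m c hm

namespace IsSubcubePartition

variable {𝒮 : Finset (Fin d → Option Bool)}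

lemma eq_of_inSubcube (h𝒮 : IsSubcubePartition 𝒮) {σ σ' : Fin d → Option Bool}
    {τ : Fin d → Bool} (hσ : σ ∈ 𝒮) (hσ' : σ' ∈ 𝒮) (hτ : InSubcube σ τ)
    (hτ' : InSubcube σ' τ) : σ = σ' :=
  (h𝒮 τ).unique ⟨hσ, hτ⟩ ⟨hσ', hτ'⟩

lemma eq_some_not_of_inSubcube_update (h𝒮 : IsSubcubePartition 𝒮) {σ R : Fin d → Option Bool}
    {x : Fin d → Bool} {k : Fin d} (hσ : σ ∈ 𝒮) (hx : InSubcube σ x) (hk : σ k = some (x k)) (hR : R ∈ 𝒮)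
    (hRx : InSubcube R (Function.update x k (!x k))) : R k = some (!x k) := by
  cases hRk : R k with
  | some c => simpa using (hRx k c hRk).symm
  | none =>
    have hRσ : R = σ := h𝒮.eq_of_inSubcube hR hσ
      (by simpa using hRx.update_of_eq_none hRk (x k)) hx
    subst hRσ
    simpa using hRx k _ hk

theorem add_two_le_card (h𝒮 : IsSubcubePartition 𝒮) {P Q : Fin d → Option Bool}
    (hP : P ∈ 𝒮) (hQ : Q ∈ 𝒮) (hfix : ∀ k, P k ≠ none ∨ Q k ≠ none) {i j : Fin d}
    (hij : i ≠ j) (hi : ∃ u, P i = some u ∧ Q i = some (!u))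
    (hj : ∃ u, P j = some u ∧ Q j = some (!u)) :
    d + 2 ≤ 𝒮.card := by
  -- vertices of `P` and `Q` that differ only where `P` and `Q` fix opposite values
  set a : Fin d → Bool := fun k => (P k).getD ((Q k).getD false) with ha_def
  set b : Fin d → Bool := fun k => (Q k).getD ((P k).getD false) with hb_def
  have ha : InSubcube P a := fun k c hk => by simp [ha_def, hk]
  have hb : InSubcube Q b := fun k c hk => by simp [hb_def, hk]
  have hab : ∀ k, a k ≠ b k → P k = some (a k) ∧ Q k = some (b k) := by
    intro k
    simp only [ha_def, hb_def]
    cases P k <;> cases Q k <;> simp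
  have hopp : ∀ {l}, (∃ u, P l = some u ∧ Q l = some (!u)) → a l ≠ b l := by
    rintro l ⟨u, hPl, hQl⟩
    rw [ha l u hPl, hb l _ hQl]
    exact (Bool.not_ne_self u).symm
  -- the `d` further parts: flip coordinate `k` of the vertex `y k`, whose part fixes `k`
  set y : Fin d → Fin d → Bool := fun k => if P k = none then b else a with hy_def
  have hyk : ∀ k, y k k = a k := by
    intro k
    by_cases hk : P k = none
    · simp only [hy_def, if_pos hk]
      by_contra h
      exact absurd (hab k (Ne.symm h)).1 (by simp [hk])
    · simp [hy_def, hk]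
  have hy : ∀ k l, y k l ≠ a l → P k = none ∧ P l ≠ none := by
    intro k l h
    by_cases hk : P k = none
    · simp only [hy_def, if_pos hk] at h
      exact ⟨hk, by simp [(hab l (Ne.symm h)).1]⟩
    · simp [hy_def, hk] at h
  choose R hR using fun k => (h𝒮 (Function.update (y k) k (!a k))).exists
  have hRk : ∀ k, R k k = some (!a k) := by
    intro k
    obtain ⟨σ, hσ, hσy, hσk⟩ : ∃ σ ∈ 𝒮, InSubcube σ (y k) ∧ σ k = some (y k k) := by
      by_cases hk : P k = none
      · obtain ⟨c, hc⟩ := Option.ne_none_iff_exists'.mp ((hfix k).resolve_left (not_not.mpr hk))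
        refine ⟨Q, hQ, by simpa [hy_def, hk] using hb, ?_⟩
        simp [hy_def, hk, hc, hb k c hc]
      · obtain ⟨c, hc⟩ := Option.ne_none_iff_exists'.mp hk
        refine ⟨P, hP, by simpa [hy_def, hk] using ha, ?_⟩
        simp [hy_def, hc, ha k c hc]
    have := h𝒮.eq_some_not_of_inSubcube_update hσ hσy hσk (hR k).1
      (by rw [hyk k]; exact (hR k).2)
    rwa [hyk k] at this
  have hRP : ∀ k, R k ≠ P := fun k h =>
    (Bool.eq_not_self _).mp (ha k _ (h ▸ hRk k))
  have hRQ : ∀ k, R k ≠ Q := by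
    intro k h
    have hbk : b k = !a k := hb k _ (h ▸ hRk k)
    obtain ⟨l, hl, hlk⟩ : ∃ l, (∃ u, P l = some u ∧ Q l = some (!u)) ∧ l ≠ k := by
      by_cases hik : i = k
      · exact ⟨j, hj, fun hjk => hij (hik.trans hjk.symm)⟩
      · exact ⟨i, hi, hik⟩
    have hyl : y k l = b l := by
      simpa [Function.update_of_ne hlk] using (hR k).2 l _ (h ▸ (hab l (hopp hl)).2)
    have hPk := (hab k (by simp [hbk])).1
    exact absurd (hy k l (hyl ▸ (hopp hl).symm)).1 (by simp [hPk])
  have hinj : Function.Injective R := by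
    intro k l h
    by_contra hkl
    have hlk : y l k ≠ a k := by
      have := (hR l).2 k _ (h ▸ hRk k)
      rw [Function.update_of_ne hkl] at this
      simp [this]
    have hkl' : y k l ≠ a l := by
      have := (hR k).2 l _ (h.symm ▸ hRk l)
      rw [Function.update_of_ne (Ne.symm hkl)] at this
      simp [this]
    exact (hy l k hlk).2 (hy k l hkl').1
  have hPQ : P ≠ Q := by
    obtain ⟨u, hPi, hQi⟩ := hi
    intro h
    simp [h, hQi] at hPi
  calc d + 2 = (insert P (insert Q (Finset.univ.image R))).card := by
        rw [Finset.card_insert_of_notMem, Finset.card_insert_of_notMem,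
          Finset.card_image_of_injective _ hinj, Finset.card_univ, Fintype.card_fin]
        · simpa using fun k => hRQ k
        · simpa [hPQ] using fun k => hRP k
    _ ≤ 𝒮.card := Finset.card_le_card <| Finset.insert_subset hP <| Finset.insert_subset hQ <|
        Finset.image_subset_iff.mpr fun k _ => (hR k).1

end IsSubcubePartition

end Subcube

open Filter Topology

section Probe

def Apart (e : EReal) (x ε : ℝ) : Prop :=
  e = x ∨ e < ((x - ε : ℝ) : EReal) ∨ ((x + ε : ℝ) : EReal) < e

lemma eventually_apart (e : EReal) (x : ℝ) : ∀ᶠ ε in 𝓝[>] (0 : ℝ), Apart e x ε := by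
  have hcont : ∀ s : ℝ, Tendsto (fun ε : ℝ => ((x + s * ε : ℝ) : EReal)) (𝓝[>] 0) (𝓝 (x : EReal)) :=
    fun s => ((continuous_coe_real_ereal.comp (by fun_prop)).tendsto' 0 _ (by simp)).mono_left
      nhdsWithin_le_nhds
  rcases lt_trichotomy e x with h | h | h
  · filter_upwards [(hcont (-1)).eventually (lt_mem_nhds h)] with ε hε
    exact Or.inr (Or.inl (by simpa [sub_eq_add_neg] using hε))
  · exact Eventually.of_forall fun _ => Or.inl h
  · filter_upwards [(hcont 1).eventually (gt_mem_nhds h)] with ε hε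
    exact Or.inr (Or.inr (by simpa using hε))

def endSign (l h : EReal) (x : ℝ) : Option Bool :=
  if l = x then some true else if h = x then some false else none

lemma mem_Icc_and_endSign_of_probe_mem {l h : EReal} {x ε : ℝ} (hε : 0 < ε)
    (hl : Apart l x ε) (hh : Apart h x ε) {b : Bool}
    (hmem : l ≤ ((if b then x + ε else x - ε : ℝ) : EReal) ∧
      ((if b then x + ε else x - ε : ℝ) : EReal) ≤ h) :
    (l ≤ x ∧ (x : EReal) ≤ h) ∧ ∀ c, endSign l h x = some c → b = c := by
  have h1 : ((x - ε : ℝ) : EReal) < x := by exact_mod_cast (by linarith)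
  have h2 : (x : EReal) < ((x + ε : ℝ) : EReal) := by exact_mod_cast (by linarith)
  obtain ⟨hlo, hhi⟩ := hmem
  unfold endSign
  refine ⟨⟨?_, ?_⟩, fun c hc => ?_⟩ <;> cases b <;>
    simp only [Bool.false_eq_true, if_true, if_false] at hlo hhi <;>
    rcases hl with hl | hl | hl <;> rcases hh with hh | hh | hh <;> try order
  all_goals split_ifs at hc <;> cases hc <;> order

lemma probe_mem_Ioo_of_endSign {l h : EReal} {x ε : ℝ} (hε : 0 < ε) (hl : Apart l x ε)
    (hh : Apart h x ε) (hlh : l < h) (hx : l ≤ x ∧ (x : EReal) ≤ h) {b : Bool}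
    (hb : ∀ c, endSign l h x = some c → b = c) :
    l < ((if b then x + ε else x - ε : ℝ) : EReal) ∧
      ((if b then x + ε else x - ε : ℝ) : EReal) < h := by
  have h1 : ((x - ε : ℝ) : EReal) < x := by exact_mod_cast (by linarith)
  have h2 : (x : EReal) < ((x + ε : ℝ) : EReal) := by exact_mod_cast (by linarith)
  unfold endSign at hb
  cases b <;> simp only [Bool.false_eq_true, if_true, if_false] <;>
    rcases hl with hl | hl | hl <;> rcases hh with hh | hh | hh <;> split_ifs at hb <;>
    simp at hb <;> constructor <;> order

lemma endSign_ne_none_or {la ha lb hb : EReal} {x : ℝ} (hx : (x : EReal) = max la lb) :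
    endSign la ha x ≠ none ∨ endSign lb hb x ≠ none := by
  unfold endSign
  rcases max_choice la lb with h | h <;> rw [h] at hx <;> simp [hx]

lemma endSign_opposite {la ha lb hb : EReal} {x : ℝ} (hla : la < ha) (hlb : lb < hb)
    (hx : (x : EReal) = max la lb) (htouch : max la lb = min ha hb) :
    ∃ u, endSign la ha x = some u ∧ endSign lb hb x = some (!u) := by
  unfold endSign
  rcases max_choice la lb with h | h <;> rcases min_choice ha hb with h' | h' <;>
    rw [h] at hx htouch <;> rw [h'] at htouch
  · order
  · exact ⟨true, by simp [hx], by simp [hx, htouch]; order⟩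
  · exact ⟨false, by simp [hx, htouch]; order, by simp [hx]⟩
  · order

end Probe

section SpaceTiling

variable {d : ℕ}

def probe (p : Fin d → ℝ) (ε : ℝ) (τ : Fin d → Bool) : Fin d → ℝ :=
  fun k => if τ k then p k + ε else p k - ε

/-- `InSubcube (signAt C p) τ` says that a box `C ∋ p` reaches into the orthant `τ` at `p`. -/
def signAt (C : Box d) (p : Fin d → ℝ) : Fin d → Option Bool :=
  fun k => endSign (C.lo k) (C.hi k) (p k)

def SeparatedAt (C : Box d) (p : Fin d → ℝ) (ε : ℝ) : Prop :=
  ∀ k, Apart (C.lo k) (p k) ε ∧ Apart (C.hi k) (p k) ε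

lemma exists_separatedAt (W : Finset (Box d)) (p : Fin d → ℝ) :
    ∃ ε > 0, ∀ C ∈ W, SeparatedAt C p ε := by
  have h : ∀ᶠ ε in 𝓝[>] (0 : ℝ), ∀ C ∈ W, SeparatedAt C p ε := by
    simp only [SeparatedAt, eventually_all_finset, eventually_all]
    exact fun C _ k => (eventually_apart _ _).and (eventually_apart _ _)
  obtain ⟨ε, hsep, hε⟩ := (h.and self_mem_nhdsWithin).exists
  exact ⟨ε, hε, hsep⟩

namespace Box

variable {C : Box d} {p : Fin d → ℝ} {ε : ℝ} {τ : Fin d → Bool}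

lemma mem_and_inSubcube_of_mem_probe (hε : 0 < ε) (hC : SeparatedAt C p ε)
    (h : C.mem (probe p ε τ)) : C.mem p ∧ InSubcube (signAt C p) τ :=
  ⟨fun k => (mem_Icc_and_endSign_of_probe_mem hε (hC k).1 (hC k).2 (h k)).1,
    fun k => (mem_Icc_and_endSign_of_probe_mem hε (hC k).1 (hC k).2 (h k)).2⟩

lemma probe_mem_interior (hε : 0 < ε) (hC : SeparatedAt C p ε) (hfull : C.FullDim)
    (hp : C.mem p) (hτ : InSubcube (signAt C p) τ) : probe p ε τ ∈ C.interior :=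
  fun k => probe_mem_Ioo_of_endSign hε (hC k).1 (hC k).2 (hfull k) (hp k) (hτ k)

end Box

structure IsSpaceTiling (W : Finset (Box d)) : Prop where
  fullDim : ∀ C ∈ W, C.FullDim
  cover : ∀ x, ∃ C ∈ W, C.mem x
  pairwise_disjoint : (W : Set (Box d)).Pairwise fun C D => Disjoint C.interior D.interior

namespace IsSpaceTiling

variable {W : Finset (Box d)}

theorem isSubcubePartition_signAt (hW : IsSpaceTiling W) (p : Fin d → ℝ) :
    IsSubcubePartition ((W.filter fun C => C.mem p).image (signAt · p)) := by
  obtain ⟨ε, hε, hsep⟩ := exists_separatedAt W p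
  intro τ
  obtain ⟨C, hC, hCτ⟩ := hW.cover (probe p ε τ)
  obtain ⟨hCp, hCτ⟩ := Box.mem_and_inSubcube_of_mem_probe hε (hsep C hC) hCτ
  refine ⟨signAt C p, ⟨Finset.mem_image_of_mem _ (Finset.mem_filter.2 ⟨hC, hCp⟩), hCτ⟩, ?_⟩
  rintro _ ⟨hσ, hDτ⟩
  obtain ⟨D, hD, rfl⟩ := Finset.mem_image.1 hσ
  rw [Finset.mem_filter] at hD
  by_contra hne
  exact Set.disjoint_left.1 (hW.pairwise_disjoint hD.1 hC fun h => hne (by rw [h]))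
    (Box.probe_mem_interior hε (hsep D hD.1) (hW.fullDim D hD.1) hD.2 hDτ)
    (Box.probe_mem_interior hε (hsep C hC) (hW.fullDim C hC) hCp hCτ)

theorem add_two_le_card_filter_mem (hW : IsSpaceTiling W) {A B : Box d} (hA : A ∈ W)
    (hB : B ∈ W) {p : Fin d → ℝ} (hpA : A.mem p) (hpB : B.mem p)
    (hp : ∀ k, (p k : EReal) = max (A.lo k) (B.lo k)) {i j : Fin d} (hij : i ≠ j)
    (hi : Touch A B i) (hj : Touch A B j) :
    d + 2 ≤ (W.filter fun C => C.mem p).card := by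
  have hopp : ∀ k, Touch A B k → ∃ u, signAt A p k = some u ∧ signAt B p k = some (!u) :=
    fun k hk => endSign_opposite (hW.fullDim A hA k) (hW.fullDim B hB k) (hp k) hk.2
  calc d + 2 ≤ ((W.filter fun C => C.mem p).image (signAt · p)).card :=
        (hW.isSubcubePartition_signAt p).add_two_le_card
          (Finset.mem_image_of_mem _ (Finset.mem_filter.2 ⟨hA, hpA⟩))
          (Finset.mem_image_of_mem _ (Finset.mem_filter.2 ⟨hB, hpB⟩))
          (fun k => endSign_ne_none_or (hp k)) hij (hopp i hi) (hopp j hj)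
    _ ≤ _ := Finset.card_image_le

end IsSpaceTiling

end SpaceTiling

section Exterior

variable {d : ℕ}

lemma extBox_fullDim (i : Fin d) (s : Bool) : (extBox d i s).FullDim := by
  intro j
  simp only [extBox]
  split_ifs
  · exact EReal.coe_lt_coe_iff.2 (by norm_num)
  · exact EReal.coe_lt_top _
  · exact EReal.bot_lt_coe _
  · exact bot_lt_top

lemma mem_extBox_iff {i : Fin d} {s : Bool} {x : Fin d → ℝ} :
    (extBox d i s).mem x ↔
      (∀ m < i, -1 ≤ x m ∧ x m ≤ 1) ∧ if s then 1 ≤ x i else x i ≤ -1 := by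
  constructor
  · intro h
    refine ⟨fun m hm => ?_, ?_⟩
    · simpa only [extBox, if_pos hm, EReal.coe_le_coe_iff] using h m
    · cases s <;> simpa only [extBox, lt_irrefl, if_false, if_true, Bool.false_eq_true,
        EReal.coe_le_coe_iff, bot_le, le_top, and_true, true_and] using h i
  · rintro ⟨hlow, hi⟩ m
    rcases lt_trichotomy m i with hm | rfl | hm
    · simpa only [extBox, if_pos hm, EReal.coe_le_coe_iff] using hlow m hm
    · cases s <;> simpa only [extBox, lt_irrefl, if_false, if_true, Bool.false_eq_true,
        EReal.coe_le_coe_iff, bot_le, le_top, and_true, true_and] using hi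
    · simp [extBox, not_lt.2 hm.le, hm.ne']

lemma mem_interior_extBox_iff {i : Fin d} {s : Bool} {x : Fin d → ℝ} :
    x ∈ (extBox d i s).interior ↔
      (∀ m < i, -1 < x m ∧ x m < 1) ∧ if s then 1 < x i else x i < -1 := by
  constructor
  · intro h
    refine ⟨fun m hm => ?_, ?_⟩
    · simpa only [extBox, if_pos hm, EReal.coe_lt_coe_iff] using h m
    · cases s <;> simpa only [extBox, lt_irrefl, if_false, if_true, Bool.false_eq_true,
        EReal.coe_lt_coe_iff, EReal.bot_lt_coe, EReal.coe_lt_top, and_true, true_and] using h i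
  · rintro ⟨hlow, hi⟩ m
    rcases lt_trichotomy m i with hm | rfl | hm
    · simpa only [extBox, if_pos hm, EReal.coe_lt_coe_iff] using hlow m hm
    · cases s <;> simpa only [extBox, lt_irrefl, if_false, if_true, Bool.false_eq_true,
        EReal.coe_lt_coe_iff, EReal.bot_lt_coe, EReal.coe_lt_top, and_true, true_and] using hi
    · simp [extBox, not_lt.2 hm.le, hm.ne']

lemma mem_withExt {𝒯 : Finset (Box d)} {C : Box d} :
    C ∈ withExt 𝒯 ↔ C ∈ 𝒯 ∨ ∃ i s, extBox d i s = C := by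
  simp [withExt, extBoxes]

lemma exists_mem_extBox_of_notMem_cube {x : Fin d → ℝ} (hx : x ∉ cube d) :
    ∃ i s, (extBox d i s).mem x := by
  simp only [cube, Set.mem_ofPred_eq, not_forall] at hx
  obtain ⟨i, hi, hmin⟩ := wellFounded_lt.has_min {k | ¬(-1 ≤ x k ∧ x k ≤ 1)} hx
  have hlow : ∀ m < i, -1 ≤ x m ∧ x m ≤ 1 := fun m hm => by_contra fun h => hmin m h hm
  rcases not_and_or.1 hi with h | h
  · exact ⟨i, false, mem_extBox_iff.2 ⟨hlow, by simp; linarith⟩⟩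
  · exact ⟨i, true, mem_extBox_iff.2 ⟨hlow, by simp; linarith⟩⟩

lemma notMem_cube_of_mem_interior_extBox {i : Fin d} {s : Bool} {x : Fin d → ℝ}
    (hx : x ∈ (extBox d i s).interior) : x ∉ cube d := by
  intro hc
  have hxi := (mem_interior_extBox_iff.1 hx).2
  cases s <;> simp only [Bool.false_eq_true, if_true, if_false] at hxi <;> linarith [hc i]

lemma disjoint_interior_extBox {a b : Fin d} {sa sb : Bool}
    (hne : extBox d a sa ≠ extBox d b sb) :
    Disjoint (extBox d a sa).interior (extBox d b sb).interior := by
  rw [Set.disjoint_left]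
  intro x hxa hxb
  rw [mem_interior_extBox_iff] at hxa hxb
  rcases lt_trichotomy a b with h | rfl | h
  · have := hxb.1 a h
    cases sa <;> simp only [Bool.false_eq_true, if_true, if_false] at hxa <;> linarith [hxa.2]
  · cases sa <;> cases sb <;> simp only [Bool.false_eq_true, if_true, if_false] at hxa hxb <;>
      first | exact hne rfl | linarith [hxa.2, hxb.2]
  · have := hxa.1 b h
    cases sb <;> simp only [Bool.false_eq_true, if_true, if_false] at hxb <;> linarith [hxb.2]

lemma Box.interior_subset_toSet (C : Box d) : C.interior ⊆ C.toSet :=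
  fun _ hx k => ⟨(hx k).1.le, (hx k).2.le⟩

theorem IsTiling.isSpaceTiling_withExt {𝒯 : Finset (Box d)} (hT : IsTiling 𝒯) :
    IsSpaceTiling (withExt 𝒯) where
  fullDim C hC := by
    obtain hC | ⟨i, s, rfl⟩ := mem_withExt.1 hC
    · exact hT.1 C hC
    · exact extBox_fullDim i s
  cover x := by
    by_cases hx : x ∈ cube d
    · obtain ⟨C, hC, hxC⟩ := hT.2.2.2 x hx
      exact ⟨C, mem_withExt.2 (Or.inl hC), hxC⟩
    · obtain ⟨i, s, h⟩ := exists_mem_extBox_of_notMem_cube hx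
      exact ⟨_, mem_withExt.2 (Or.inr ⟨i, s, rfl⟩), h⟩
  pairwise_disjoint C hC D hD hne := by
    obtain hC | ⟨a, sa, rfl⟩ := mem_withExt.1 hC <;> obtain hD | ⟨b, sb, rfl⟩ := mem_withExt.1 hD
    · exact Set.disjoint_iff_inter_eq_empty.2 (hT.2.2.1 C hC D hD hne)
    · exact Set.disjoint_right.2 fun x hx hxC =>
        notMem_cube_of_mem_interior_extBox hx (hT.2.1 C hC (C.interior_subset_toSet hxC))
    · exact Set.disjoint_left.2 fun x hx hxD =>
        notMem_cube_of_mem_interior_extBox hx (hT.2.1 D hD (D.interior_subset_toSet hxD))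
    · exact disjoint_interior_extBox hne

lemma eq_min_of_touch_extBox {a b k : Fin d} {sa sb : Bool}
    (h : Touch (extBox d a sa) (extBox d b sb) k) : k = min a b := by
  obtain ⟨-, h⟩ := h
  wlog hab : a ≤ b generalizing a b sa sb
  · rw [min_comm]
    exact this (by rwa [max_comm, min_comm]) (le_of_not_ge hab)
  rw [min_eq_left hab]
  by_contra hk
  rcases lt_or_gt_of_ne hk with hka | hka
  · simp only [extBox, if_pos hka, if_pos (hka.trans_le hab), max_self, min_self] at h
    exact absurd (EReal.coe_injective h) (by norm_num)
  · have hb := extBox_fullDim b sb k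
    simp only [extBox, if_neg (not_lt.2 hka.le), if_neg hka.ne', bot_le, max_eq_right, le_top,
      min_eq_right] at h
    simp only [extBox, h, lt_irrefl] at hb

end Exterior

section Corner

variable {d : ℕ}

lemma Touch.symm {A B : Box d} {k : Fin d} (h : Touch A B k) : Touch B A k :=
  ⟨h.1.imp fun _ hx => ⟨hx.2, hx.1⟩, by rw [max_comm, min_comm]; exact h.2⟩

lemma Box.lo_ne_bot_of_subset_cube {A : Box d} (hA : A.toSet ⊆ cube d) {q : Fin d → ℝ}
    (hq : A.mem q) (k : Fin d) : A.lo k ≠ ⊥ := by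
  intro hbot
  have hq' : A.mem (Function.update q k (-2)) := by
    intro m
    rcases eq_or_ne m k with rfl | hmk
    · rw [Function.update_self, hbot]
      exact ⟨bot_le, le_trans (EReal.coe_le_coe_iff.2 (by linarith [(hA hq m).1])) (hq m).2⟩
    · simpa [Function.update_of_ne hmk] using hq m
  exact absurd (hA hq' k).1 (by norm_num)

lemma exists_mem_inter_eq_max_lo {A B : Box d} (hA : ∀ k, A.lo k ≠ ⊥) {q : Fin d → ℝ}
    (hqA : A.mem q) (hqB : B.mem q) :
    ∃ p : Fin d → ℝ, A.mem p ∧ B.mem p ∧ ∀ k, (p k : EReal) = max (A.lo k) (B.lo k) := by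
  have hle : ∀ k, max (A.lo k) (B.lo k) ≤ q k := fun k => max_le (hqA k).1 (hqB k).1
  have hp : ∀ k, ((max (A.lo k) (B.lo k)).toReal : EReal) = max (A.lo k) (B.lo k) :=
    fun k => EReal.coe_toReal ((hle k).trans_lt (EReal.coe_lt_top _)).ne
      (ne_bot_of_le_ne_bot (hA k) (le_max_left _ _))
  refine ⟨fun k => (max (A.lo k) (B.lo k)).toReal, fun k => ?_, fun k => ?_, hp⟩ <;> rw [hp k]
  · exact ⟨le_max_left _ _, (hle k).trans (hqA k).2⟩
  · exact ⟨le_max_right _ _, (hle k).trans (hqB k).2⟩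

end Corner

theorem stmt4_general (d : ℕ) (𝒯 : Finset (Box d)) (hT : IsTiling 𝒯)
    (A B : Box d) (hA : A ∈ withExt 𝒯) (hB : B ∈ withExt 𝒯)
    (htouch : ∃ i j : Fin d, i ≠ j ∧ Touch A B i ∧ Touch A B j) :
    ∃ p ∈ A.toSet ∩ B.toSet,
      d + 2 ≤ ((withExt 𝒯).filter fun C => C.mem p).card := by
  obtain ⟨i, j, hij, hi, hj⟩ := htouch
  wlog hAT : A ∈ 𝒯 generalizing A B
  · have hBT : B ∈ 𝒯 := by
      by_contra hBT
      obtain ⟨a, sa, rfl⟩ := (mem_withExt.1 hA).resolve_left hAT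
      obtain ⟨b, sb, rfl⟩ := (mem_withExt.1 hB).resolve_left hBT
      exact hij ((eq_min_of_touch_extBox hi).trans (eq_min_of_touch_extBox hj).symm)
    obtain ⟨p, ⟨hpB, hpA⟩, hcard⟩ := this B A hB hA hi.symm hj.symm hBT
    exact ⟨p, ⟨hpA, hpB⟩, hcard⟩
  obtain ⟨q, hqA, hqB⟩ := hi.1
  obtain ⟨p, hpA, hpB, hp⟩ :=
    exists_mem_inter_eq_max_lo (Box.lo_ne_bot_of_subset_cube (hT.2.1 A hAT) hqA) hqA hqB
  exact ⟨p, ⟨hpA, hpB⟩,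
    hT.isSpaceTiling_withExt.add_two_le_card_filter_mem hA hB hpA hpB hp hij hi hj⟩

/-- In a `d`-tiling `T`, if two boxes `A, B ∈ T ∪ T_ext`
intersect and touch in more than one dimension, then there is a point of
`A ∩ B` contained in at least `d + 2` boxes of `T ∪ T_ext`. -/
theorem stmt4 (d : ℕ) (𝒯 : Finset (Box d)) (hT : IsTiling 𝒯)
    (A B : Box d) (hA : A ∈ withExt 𝒯) (hB : B ∈ withExt 𝒯)
    (hint : Intersects A B)
    (htouch : ∃ i j : Fin d, i ≠ j ∧ Touch A B i ∧ Touch A B j) :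
    ∃ p ∈ A.toSet ∩ B.toSet,
      d + 2 ≤ ((withExt 𝒯).filter fun C => C.mem p).card :=
  stmt4_general d 𝒯 hT A B hA hB htouch

end
end

section
/- Let d ≥ 3 and let S ⊂ ℝ^d be a connected set that is a finite union of d-dimensional d-boxes. If for every i ∈ {1,…,d} and every x ∈ ℝ the slice S ∩ H^(i)_x is either empty or a box, then S is a box. -/
/- Common framework: axis-parallel boxes (with extended-real endpoints, to
accommodate the unbounded exterior boxes of `T_ext`), `d`-tilings of the cube
`[-1,1]^d`, the exterior boxes, proper tilings, slices, cuts, sides and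
separations. -/

noncomputable section

open Classical

attribute [local instance] Classical.propDecidable

/-!
Two points of `S` that agree in a coordinate `k` lie in the box `S ∩ H^(k)_x`, so replacing one
coordinate of the first point by that of the second stays in `S`. Using a third coordinate, this
swap property propagates along chains of points of `S` in which consecutive points share a
coordinate. Such chains join any two points of a box, hence, `S` being a connected finite union of
closed boxes, any two points of `S`. So `S` is the product of its coordinate projections, which are
closed intervals.
-/

open Function Set Relation

section SwapClosed

variable {ι α : Type*} [DecidableEq ι]

def SwapClosed (S : Set (ι → α)) : Prop :=
  ∀ p ∈ S, ∀ q ∈ S, ∀ i, update p i (q i) ∈ S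

def ShareCoord (S : Set (ι → α)) (p q : ι → α) : Prop :=
  p ∈ S ∧ q ∈ S ∧ ∃ k, p k = q k

variable {S : Set (ι → α)}

lemma swapClosed_empty : SwapClosed (∅ : Set (ι → α)) := fun _ hp => hp.elim

lemma SwapClosed.image_eval_eq (hS : SwapClosed S) {p₀ : ι → α} (hp₀ : p₀ ∈ S) (i : ι) :
    eval i '' S = update p₀ i ⁻¹' S := by
  ext x
  exact ⟨by rintro ⟨q, hq, rfl⟩; exact hS p₀ hp₀ q hq i, fun hx => ⟨_, hx, update_self ..⟩⟩

lemma SwapClosed.eq_pi [Finite ι] (hS : SwapClosed S) (hne : S.Nonempty) :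
    S = univ.pi fun i => eval i '' S := by
  refine (subset_pi_eval_image _ _).antisymm fun r hr => ?_
  have hagree : ∀ A : Finset ι, ∃ s ∈ S, ∀ i ∈ A, s i = r i := by
    intro A
    induction A using Finset.induction_on with
    | empty => exact ⟨hne.some, hne.some_mem, by simp⟩
    | insert i A _ ih =>
      obtain ⟨s, hs, hsA⟩ := ih
      obtain ⟨t, ht, hti⟩ := hr i trivial
      refine ⟨update s i (t i), hS s hs t ht i, fun j hj => ?_⟩
      rcases eq_or_ne j i with rfl | hji
      · simpa using hti
      · simpa [hji] using hsA j ((Finset.mem_insert.mp hj).resolve_left hji)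
  have := Fintype.ofFinite ι
  obtain ⟨s, hs, hsr⟩ := hagree Finset.univ
  rwa [← funext fun i => hsr i (Finset.mem_univ i)]

lemma SwapClosed.reflTransGen_shareCoord [Nontrivial ι] {T : Set (ι → α)} (hT : SwapClosed T)
    (hTS : T ⊆ S) {p q : ι → α} (hp : p ∈ T) (hq : q ∈ T) : ReflTransGen (ShareCoord S) p q := by
  obtain ⟨i, j, hij⟩ := exists_pair_ne ι
  have hw := hT p hp q hq i
  exact .tail (.single ⟨hTS hp, hTS hw, j, (update_of_ne hij.symm _ _).symm⟩)
    ⟨hTS hw, hTS hq, i, update_self ..⟩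

lemma update_mem_of_apply_eq (hsec : ∀ k x, SwapClosed (S ∩ {p | p k = x})) {p q : ι → α}
    (hp : p ∈ S) (hq : q ∈ S) {k : ι} (hk : p k = q k) (i : ι) : update p i (q i) ∈ S :=
  (hsec k (p k) p ⟨hp, rfl⟩ q ⟨hq, hk.symm⟩ i).1

lemma update_mem_of_shareCoord_of_shareCoord (hsec : ∀ k x, SwapClosed (S ∩ {p | p k = x}))
    (hι : 3 ≤ ENat.card ι) {p m q : ι → α}
    (hpm : ShareCoord S p m) (hmq : ShareCoord S m q) (i : ι) : update p i (q i) ∈ S := by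
  obtain ⟨hp, hm, k, hk⟩ := hpm
  obtain ⟨-, hq, l, hl⟩ := hmq
  have ha : update m i (q i) ∈ S := update_mem_of_apply_eq hsec hm hq hl i
  rcases ne_or_eq k i with hki | rfl
  · simpa using update_mem_of_apply_eq hsec hp ha (k := k) (by simpa [hki] using hk) i
  -- `p` and `m` may agree only in the coordinate `k` being replaced: detour through
  -- `update p l (m l)` and come back to `p` through a third coordinate `j`.
  rcases eq_or_ne l k with rfl | hlk
  · rwa [← hl, ← hk, update_eq_self]
  have hc : update p l (m l) ∈ S := update_mem_of_apply_eq hsec hp hm hk l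
  have hca : update (update p l (m l)) k (q k) ∈ S := by
    simpa using update_mem_of_apply_eq hsec hc ha (k := l) (by simp [hlk]) k
  obtain ⟨j, hjk, hjl⟩ := ENat.exists_ne_ne_of_three_le hι k l
  have := update_mem_of_apply_eq hsec hca hp (k := j) (by simp [hjk, hjl]) l
  rwa [update_comm hlk, update_idem, show p l = update p k (q k) l by simp [hlk],
    update_eq_self] at this

lemma update_mem_of_reflTransGen (hsec : ∀ k x, SwapClosed (S ∩ {p | p k = x}))
    (hι : 3 ≤ ENat.card ι) {p q : ι → α} (hp : p ∈ S) (hpq : ReflTransGen (ShareCoord S) p q)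
    (i : ι) : update p i (q i) ∈ S := by
  induction hpq with
  | refl => rwa [update_eq_self]
  | @tail m w _ hmw ih =>
    have hvm : ShareCoord S (update p i (m i)) m := ⟨ih, hmw.1, i, update_self ..⟩
    simpa using update_mem_of_shareCoord_of_shareCoord hsec hι hvm hmw i

end SwapClosed

theorem IsPreconnected.reflTransGen_of_eq_biUnion {X β : Type*} [TopologicalSpace X] {S : Set X}
    (hS : IsPreconnected S) {s : Finset β} {F : β → Set X} (hSF : S = ⋃ b ∈ s, F b)
    (hF : ∀ b ∈ s, IsClosed (F b)) {r : X → X → Prop}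
    (hr : ∀ b ∈ s, ∀ x ∈ F b, ∀ y ∈ F b, ReflTransGen r x y) {p q : X} (hp : p ∈ S)
    (hq : q ∈ S) : ReflTransGen r p q := by
  classical
  set T := {x | ReflTransGen r p x}
  set U₁ := ⋃ b ∈ s.filter fun b => (F b ∩ T).Nonempty, F b
  set U₂ := ⋃ b ∈ s.filter fun b => ¬(F b ∩ T).Nonempty, F b
  have hU₁T : U₁ ⊆ T := by
    simp only [U₁, iUnion_subset_iff, Finset.mem_filter]
    rintro b ⟨hb, x, hx, hpx⟩ y hy
    exact hpx.trans (hr b hb x hx y hy)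
  have hU₂T : Disjoint U₂ T := by
    simp only [U₂, disjoint_iUnion_left, Finset.mem_filter, not_nonempty_iff_eq_empty]
    exact fun b hb => disjoint_iff_inter_eq_empty.mpr hb.2
  have hcover : S ⊆ U₁ ∪ U₂ := by
    rw [hSF]
    refine iUnion₂_subset fun b hb => ?_
    by_cases h : (F b ∩ T).Nonempty
    · exact subset_union_left.trans' (subset_biUnion_of_mem (by simp [hb, h]))
    · exact subset_union_right.trans' (subset_biUnion_of_mem (by simp [hb, h]))
  by_contra hpq
  have hpU₁ : p ∈ U₁ := (hcover hp).resolve_right fun h => hU₂T.notMem_of_mem_left h .refl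
  have hqU₂ : q ∈ U₂ := (hcover hq).resolve_left fun h => hpq (hU₁T h)
  obtain ⟨x, -, hx₁, hx₂⟩ := isPreconnected_closed_iff.mp hS U₁ U₂
    (isClosed_biUnion_finset fun b hb => hF b (Finset.mem_filter.mp hb).1)
    (isClosed_biUnion_finset fun b hb => hF b (Finset.mem_filter.mp hb).1)
    hcover ⟨p, hp, hpU₁⟩ ⟨q, hq, hqU₂⟩
  exact hU₂T.notMem_of_mem_left hx₂ (hU₁T hx₁)

theorem SwapClosed.of_isPreconnected_biUnion {ι α β : Type*} [DecidableEq ι] [TopologicalSpace α]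
    {S : Set (ι → α)} (hι : 3 ≤ ENat.card ι) (hsec : ∀ k x, SwapClosed (S ∩ {p | p k = x}))
    (hS : IsPreconnected S) {s : Finset β} {F : β → Set (ι → α)} (hSF : S = ⋃ b ∈ s, F b)
    (hF : ∀ b ∈ s, IsClosed (F b) ∧ SwapClosed (F b)) : SwapClosed S := by
  have : Nontrivial ι := (ENat.one_lt_card_iff_nontrivial ι).mp (lt_of_lt_of_le (by norm_num) hι)
  have hFS : ∀ b ∈ s, F b ⊆ S := fun b hb => hSF ▸ subset_biUnion_of_mem hb
  intro p hp q hq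
  exact update_mem_of_reflTransGen hsec hι hp <| hS.reflTransGen_of_eq_biUnion hSF
    (fun b hb => (hF b hb).1)
    (fun b hb _ hx _ hy => (hF b hb).2.reflTransGen_shareCoord (hFS b hb) hx hy) hp hq

lemma IsClosed.mem_iff_sInf_le_and_le_sSup {I : Set ℝ} (hI : IsClosed I) (hc : IsPreconnected I)
    {y : ℝ} : y ∈ I ↔ sInf (((↑) : ℝ → EReal) '' I) ≤ y ∧ (y : EReal) ≤ sSup ((↑) '' I) := by
  refine ⟨fun hy => ⟨sInf_le (mem_image_of_mem _ hy), le_sSup (mem_image_of_mem _ hy)⟩, ?_⟩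
  rintro ⟨hlo, hhi⟩
  rcases I.eq_empty_or_nonempty with rfl | hne
  · simp at hlo
  have hJ : IsPreconnected (closure (((↑) : ℝ → EReal) '' I)) :=
    (hc.image _ continuous_coe_real_ereal.continuousOn).closure
  rw [← hI.closure_eq, EReal.isEmbedding_coe.closure_eq_preimage_closure_image]
  exact hJ.ordConnected.out (sInf_mem_closure (hne.image _)) (sSup_mem_closure (hne.image _))
    ⟨hlo, hhi⟩

namespace Box

variable {d : ℕ}

lemma isClosed_toSet (B : Box d) : IsClosed B.toSet := by
  have : B.toSet = ⋂ i, (fun p : Fin d → ℝ => (p i : EReal)) ⁻¹' Icc (B.lo i) (B.hi i) := by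
    ext p
    simp [Box.toSet, Box.mem]
  rw [this]
  exact isClosed_iInter fun i =>
    isClosed_Icc.preimage (continuous_coe_real_ereal.comp (continuous_apply i))

lemma swapClosed_toSet (B : Box d) : SwapClosed B.toSet := by
  intro p hp q hq i j
  rcases eq_or_ne j i with rfl | hji
  · simpa using hq j
  · simpa [hji] using hp j

lemma exists_toSet_eq_pi {I : Fin d → Set ℝ} (hcl : ∀ i, IsClosed (I i))
    (hc : ∀ i, IsPreconnected (I i)) : ∃ C : Box d, C.toSet = univ.pi I := by
  refine ⟨⟨fun i => sInf ((↑) '' I i), fun i => sSup ((↑) '' I i)⟩, ?_⟩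
  ext p
  simp [Box.toSet, Box.mem, (hcl _).mem_iff_sInf_le_and_le_sSup (hc _)]

end Box

theorem stmt11_general (d : ℕ) (hd : 3 ≤ d) (S : Set (Fin d → ℝ))
    (hconn : IsConnected S)
    (𝓑 : Finset (Box d))
    (hS : S = ⋃ B ∈ 𝓑, B.toSet)
    (hslice : ∀ (i : Fin d) (x : ℝ),
      S ∩ {p | p i = x} = ∅ ∨ ∃ C : Box d, S ∩ {p | p i = x} = C.toSet) :
    ∃ C : Box d, S = C.toSet := by
  have hclosed : IsClosed S := hS ▸ isClosed_biUnion_finset fun B _ => B.isClosed_toSet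
  have hsec : ∀ k x, SwapClosed (S ∩ {p | p k = x}) := fun k x => by
    rcases hslice k x with h | ⟨C, hC⟩
    · exact h ▸ swapClosed_empty
    · exact hC ▸ C.swapClosed_toSet
  have hswap : SwapClosed S := .of_isPreconnected_biUnion (by simpa using hd) hsec
    hconn.isPreconnected hS fun B _ => ⟨B.isClosed_toSet, B.swapClosed_toSet⟩
  obtain ⟨p₀, hp₀⟩ := hconn.nonempty
  obtain ⟨C, hC⟩ := Box.exists_toSet_eq_pi (I := fun i => eval i '' S)
    (fun i => hswap.image_eval_eq hp₀ i ▸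
      hclosed.preimage (continuous_const.update i continuous_id))
    (fun i => hconn.isPreconnected.image _ (continuous_apply i).continuousOn)
  exact ⟨C, (hswap.eq_pi hconn.nonempty).trans hC.symm⟩

/-- Let `d ≥ 3` and let `S ⊆ ℝ^d` be a connected set that is a
finite union of `d`-dimensional `d`-boxes. If every slice `S ∩ H^(i)_x` is
empty or a box, then `S` is a box. -/
theorem stmt11 (d : ℕ) (hd : 3 ≤ d) (S : Set (Fin d → ℝ))
    (hconn : IsConnected S)
    (𝓑 : Finset (Box d)) (hfull : ∀ B ∈ 𝓑, B.FullDim)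
    (hS : S = ⋃ B ∈ 𝓑, B.toSet)
    (hslice : ∀ (i : Fin d) (x : ℝ),
      S ∩ {p | p i = x} = ∅ ∨ ∃ C : Box d, S ∩ {p | p i = x} = C.toSet) :
    ∃ C : Box d, S = C.toSet :=
  stmt11_general d hd S hconn 𝓑 hS hslice
end
end
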